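/- arXiv:2504.16790 — 2 statements merged into one kernel-verified Lean document; each statement's English description precedes it below -/
import Mathlib

section
/- Let 0 < Lint < Lext and 0 < b < Lext be real numbers, and set Φ(β) := Lext + b·cos β. Let H : ℝ → ℝ and F : ℝ × ℝ → ℝ be twice continuously differentiable on an open set containing (Lint, Lext] and (Lint, Lext] × ℝ respectively, with H > 0 and F > 0 there. Suppose F(Lext, β) = Φ(β)² for all β, H(Lext) = 1, and additionally ∂ℓF(Lext, β) = ∂ℓ²F(Lext, β) = 0 for all β. Then for every ϑ ∈ [0,1], as (ℓ, β) → (Lext, π) with ℓ < Lext, the scalar Z_ϑ(ℓ,β) converges to −1/(b(Lext−b)) + (ϑ²/4)·(2H''(Lext) − H'(Lext)²). -/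
open Real Filter Set

/-- First partial derivative of `F` with respect to its first argument `ℓ`. -/
noncomputable def pdl (F : ℝ × ℝ → ℝ) (l β : ℝ) : ℝ := deriv (fun x => F (x, β)) l

/-- Second partial derivative of `F` with respect to its first argument `ℓ`. -/
noncomputable def pdll (F : ℝ × ℝ → ℝ) (l β : ℝ) : ℝ := deriv (fun x => pdl F x β) l

/-- First partial derivative of `F` with respect to its second argument `β`. -/
noncomputable def pdb (F : ℝ × ℝ → ℝ) (l β : ℝ) : ℝ := deriv (fun y => F (l, y)) β

/-- Second partial derivative of `F` with respect to its second argument `β`. -/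
noncomputable def pdbb (F : ℝ × ℝ → ℝ) (l β : ℝ) : ℝ := deriv (fun y => pdb F l y) β

/-- The scalar `Z_ϑ = G_{ab} (A_ϑ)^a (A_ϑ)^b` for the metric
`ds² = −H dτ² + dℓ² + F dα² + b² dβ²` and `A_ϑ = H^{−1/2} ∂_τ + ϑ b^{−1} ∂_β`. -/
noncomputable def Zscalar (b : ℝ) (H : ℝ → ℝ) (F : ℝ × ℝ → ℝ) (ϑ l β : ℝ) : ℝ :=
  (1 / (4 * b ^ 2)) * ((pdb F l β / F (l, β)) ^ 2 - 2 * pdbb F l β / F (l, β))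
  + ((1 - ϑ ^ 2) / 4) * ((pdl F l β / F (l, β)) ^ 2 - 2 * pdll F l β / F (l, β))
  + (ϑ ^ 2 / 4) * (2 * deriv (deriv H) l / H l - (deriv H l / H l) ^ 2
      + (deriv H l / H l) * (pdl F l β / F (l, β)))

/-!
On the open set `V` the partial derivatives of the `C²` function `F` are coordinates of `fderiv F`
and of its derivative, hence continuous; so `Z_ϑ` is continuous at `(Lext, π)`, where `F` and `H`
do not vanish, and its one-sided limit there is simply its value. That value is read off from
`F(Lext, β) = (Lext + b cos β)²`, `H(Lext) = 1` and the vanishing `ℓ`-derivatives.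
-/

section PartialDerivatives

variable {F : ℝ × ℝ → ℝ} {V : Set (ℝ × ℝ)}

theorem pdl_eq_fderiv_apply {l β : ℝ} (hF : DifferentiableAt ℝ F (l, β)) :
    pdl F l β = fderiv ℝ F (l, β) (1, 0) :=
  (hF.hasFDerivAt.comp_hasDerivAt l ((hasDerivAt_id l).prodMk (hasDerivAt_const l β))).deriv

theorem pdll_eq_pdl_fderiv_apply (hV : IsOpen V) (hF : DifferentiableOn ℝ F V) {l β : ℝ}
    (hp : (l, β) ∈ V) : pdll F l β = pdl (fun q => fderiv ℝ F q (1, 0)) l β := by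
  have hline : ∀ᶠ x in nhds l, (x, β) ∈ V :=
    (continuous_id.prodMk continuous_const).continuousAt.preimage_mem_nhds (hV.mem_nhds hp)
  refine EventuallyEq.deriv_eq (hline.mono fun x hx => ?_)
  exact pdl_eq_fderiv_apply (hF.differentiableAt (hV.mem_nhds hx))

theorem continuousOn_pdl (hV : IsOpen V) (hF : ContDiffOn ℝ 1 F V) :
    ContinuousOn (fun p : ℝ × ℝ => pdl F p.1 p.2) V := by
  have hG : ContinuousOn (fun q => fderiv ℝ F q (1, 0)) V :=
    (hF.continuousOn_fderiv_of_isOpen hV le_rfl).clm_apply continuousOn_const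
  refine hG.congr fun p hp => ?_
  exact pdl_eq_fderiv_apply ((hF.differentiableOn one_ne_zero).differentiableAt (hV.mem_nhds hp))

theorem continuousOn_pdll (hV : IsOpen V) (hF : ContDiffOn ℝ 2 F V) :
    ContinuousOn (fun p : ℝ × ℝ => pdll F p.1 p.2) V := by
  have hG : ContDiffOn ℝ 1 (fun q => fderiv ℝ F q (1, 0)) V :=
    (hF.fderiv_of_isOpen hV (by norm_num)).clm_apply contDiffOn_const
  exact (continuousOn_pdl hV hG).congr fun p hp =>
    pdll_eq_pdl_fderiv_apply hV (hF.differentiableOn two_ne_zero) hp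

-- `pdb F l β` and `pdbb F l β` are definitionally `pdl (F ∘ Prod.swap) β l` and
-- `pdll (F ∘ Prod.swap) β l`.
theorem continuousOn_pdb (hV : IsOpen V) (hF : ContDiffOn ℝ 1 F V) :
    ContinuousOn (fun p : ℝ × ℝ => pdb F p.1 p.2) V :=
  (continuousOn_pdl (hV.preimage continuous_swap)
    (hF.comp_continuousLinearMap (ContinuousLinearEquiv.prodComm ℝ ℝ ℝ).toContinuousLinearMap)).comp
    continuous_swap.continuousOn fun p hp => by simpa using hp

theorem continuousOn_pdbb (hV : IsOpen V) (hF : ContDiffOn ℝ 2 F V) :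
    ContinuousOn (fun p : ℝ × ℝ => pdbb F p.1 p.2) V :=
  (continuousOn_pdll (hV.preimage continuous_swap)
    (hF.comp_continuousLinearMap (ContinuousLinearEquiv.prodComm ℝ ℝ ℝ).toContinuousLinearMap)).comp
    continuous_swap.continuousOn fun p hp => by simpa using hp

variable {U : Set ℝ} {H : ℝ → ℝ}

theorem continuousAt_Zscalar (hU : IsOpen U) (hH : ContDiffOn ℝ 2 H U) (hV : IsOpen V)
    (hF : ContDiffOn ℝ 2 F V) (b ϑ : ℝ) {p : ℝ × ℝ} (hpU : p.1 ∈ U) (hpV : p ∈ V)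
    (hHp : H p.1 ≠ 0) (hFp : F p ≠ 0) :
    ContinuousAt (fun q : ℝ × ℝ => Zscalar b H F ϑ q.1 q.2) p := by
  have hH' : ContDiffOn ℝ 1 (deriv H) U := hH.deriv_of_isOpen hU (by norm_num)
  have cH := hH.continuousOn.continuousAt (hU.mem_nhds hpU)
  have cH' := hH'.continuousOn.continuousAt (hU.mem_nhds hpU)
  have cH'' := (hH'.continuousOn_deriv_of_isOpen hU le_rfl).continuousAt (hU.mem_nhds hpU)
  have cF := hF.continuousOn.continuousAt (hV.mem_nhds hpV)
  have cl := (continuousOn_pdl hV (hF.of_le one_le_two)).continuousAt (hV.mem_nhds hpV)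
  have cll := (continuousOn_pdll hV hF).continuousAt (hV.mem_nhds hpV)
  have cb := (continuousOn_pdb hV (hF.of_le one_le_two)).continuousAt (hV.mem_nhds hpV)
  have cbb := (continuousOn_pdbb hV hF).continuousAt (hV.mem_nhds hpV)
  simp only [Zscalar, Prod.mk.eta]
  fun_prop (disch := assumption)

theorem pdb_pdbb_at_pi_of_eq_sq_add_mul_cos {l b : ℝ} (hF : ∀ β, F (l, β) = (l + b * cos β) ^ 2) :
    pdb F l π = 0 ∧ pdbb F l π = 2 * b * (l - b) := by
  have hd : ∀ β, HasDerivAt (fun y => F (l, y)) (-(2 * b * sin β * (l + b * cos β))) β := by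
    intro β
    simp only [hF]
    exact (((hasDerivAt_cos β).const_mul b).const_add l).pow 2 |>.congr_deriv (by ring)
  have hd2 : HasDerivAt (fun β => -(2 * b * sin β * (l + b * cos β))) (2 * b * (l - b)) π :=
    (((hasDerivAt_sin π).const_mul (2 * b)).mul (((hasDerivAt_cos π).const_mul b).const_add l)).neg
      |>.congr_deriv (by rw [sin_pi, cos_pi]; ring)
  have hpdb : (fun β => pdb F l β) = fun β => -(2 * b * sin β * (l + b * cos β)) :=
    funext fun β => (hd β).deriv
  refine ⟨(hd π).deriv.trans (by simp), ?_⟩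
  rw [pdbb, hpdb, hd2.deriv]

end PartialDerivatives

theorem Z_tendsto_at_external_boundary_of_lderivs_vanish_general
    (Lint Lext b : ℝ) (hLL : Lint < Lext) (hb : 0 < b) (hbL : b < Lext)
    (H : ℝ → ℝ) (F : ℝ × ℝ → ℝ)
    (U : Set ℝ) (hUopen : IsOpen U) (hUsub : Set.Ioc Lint Lext ⊆ U)
    (V : Set (ℝ × ℝ)) (hVopen : IsOpen V)
    (hVsub : Set.Ioc Lint Lext ×ˢ (Set.univ : Set ℝ) ⊆ V)
    (hH : ContDiffOn ℝ 2 H U) (hF : ContDiffOn ℝ 2 F V)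
    (hFext : ∀ β : ℝ, F (Lext, β) = (Lext + b * Real.cos β) ^ 2)
    (hHext : H Lext = 1)
    (hdl : ∀ β : ℝ, pdl F Lext β = 0) (hdll : ∀ β : ℝ, pdll F Lext β = 0)
    (ϑ : ℝ) :
    Filter.Tendsto (fun p : ℝ × ℝ => Zscalar b H F ϑ p.1 p.2)
      (nhdsWithin (Lext, Real.pi) {p : ℝ × ℝ | p.1 < Lext})
      (nhds (-(1 / (b * (Lext - b)))
        + (ϑ ^ 2 / 4) * (2 * deriv (deriv H) Lext - (deriv H Lext) ^ 2))) := by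
  have hbL' : Lext - b ≠ 0 := (sub_pos.2 hbL).ne'
  have hFπ : F (Lext, π) = (Lext - b) ^ 2 := by rw [hFext, cos_pi]; ring
  obtain ⟨hpdb, hpdbb⟩ := pdb_pdbb_at_pi_of_eq_sq_add_mul_cos hFext
  have hcont : ContinuousAt (fun p : ℝ × ℝ => Zscalar b H F ϑ p.1 p.2) (Lext, π) :=
    continuousAt_Zscalar hUopen hH hVopen hF b ϑ (hUsub ⟨hLL, le_rfl⟩)
      (hVsub ⟨⟨hLL, le_rfl⟩, mem_univ π⟩) (by simp [hHext]) (by rw [hFπ]; positivity)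
  have hvalue : Zscalar b H F ϑ Lext π = -(1 / (b * (Lext - b)))
      + (ϑ ^ 2 / 4) * (2 * deriv (deriv H) Lext - (deriv H Lext) ^ 2) := by
    simp only [Zscalar, hdl, hdll, hpdb, hpdbb, hHext, hFπ]
    field_simp
    ring
  exact hvalue ▸ hcont.tendsto.mono_left nhdsWithin_le_nhds

/-- Asymptotic formula (4.21) in the proof of Theorem 1 of the paper: if moreover the first and
second `ℓ`-derivatives of `F` vanish at `ℓ = Lext`, then `Z_ϑ` tends to
`−1/(b(Lext−b)) + (ϑ²/4)(2H''(Lext) − H'(Lext)²)` as `(ℓ, β) → (Lext, π)` with `ℓ < Lext`. -/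
theorem Z_tendsto_at_external_boundary_of_lderivs_vanish
    (Lint Lext b : ℝ) (hLint : 0 < Lint) (hLL : Lint < Lext) (hb : 0 < b) (hbL : b < Lext)
    (H : ℝ → ℝ) (F : ℝ × ℝ → ℝ)
    (U : Set ℝ) (hUopen : IsOpen U) (hUsub : Set.Ioc Lint Lext ⊆ U)
    (V : Set (ℝ × ℝ)) (hVopen : IsOpen V)
    (hVsub : Set.Ioc Lint Lext ×ˢ (Set.univ : Set ℝ) ⊆ V)
    (hH : ContDiffOn ℝ 2 H U) (hF : ContDiffOn ℝ 2 F V)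
    (hHpos : ∀ x ∈ U, 0 < H x) (hFpos : ∀ p ∈ V, 0 < F p)
    (hFext : ∀ β : ℝ, F (Lext, β) = (Lext + b * Real.cos β) ^ 2)
    (hHext : H Lext = 1)
    (hdl : ∀ β : ℝ, pdl F Lext β = 0) (hdll : ∀ β : ℝ, pdll F Lext β = 0)
    (ϑ : ℝ) (hϑ : ϑ ∈ Set.Icc (0 : ℝ) 1) :
    Filter.Tendsto (fun p : ℝ × ℝ => Zscalar b H F ϑ p.1 p.2)
      (nhdsWithin (Lext, Real.pi) {p : ℝ × ℝ | p.1 < Lext})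
      (nhds (-(1 / (b * (Lext - b)))
        + (ϑ ^ 2 / 4) * (2 * deriv (deriv H) Lext - (deriv H Lext) ^ 2))) :=
  Z_tendsto_at_external_boundary_of_lderivs_vanish_general Lint Lext b hLL hb hbL H F U hUopen hUsub
    V hVopen hVsub hH hF hFext hHext hdl hdll ϑ
end

section
/- Let 0 < Lint < Lext and 0 < b < Lext be real numbers, and set Φ(β) := Lext + b·cos β. Let F, G, H : ℝ → ℝ be twice continuously differentiable on an open set containing (Lint, Lext], with H > 0 and F(ℓ)·Φ(β)² + G(ℓ) > 0 on (Lint, Lext] × ℝ. Suppose G(Lext) = 0, F(Lext) = H(Lext) = 1, F'(Lext) = F''(Lext) = G'(Lext) = G''(Lext) = 0, and additionally H'(Lext) = H''(Lext) = 0. Then, with 𝓕(ℓ,β) := F(ℓ)·Φ(β)² + G(ℓ), there exists δ > 0 such that Z_1(ℓ,β) < 0 for all (ℓ,β) ∈ (Lext−δ, Lext) × (π−δ, π+δ); that is, the null energy condition is violated in an open set sufficiently close to ℓ = Lext and β = π. -/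
open Real Filter Set

/-! At `(Lext, π)` the β-derivative of `𝓕` vanishes while `∂β²𝓕 = 2b(Lext - b)` and
`𝓕 = (Lext - b)²`, and `H' = H'' = 0` kills the `H`-terms, so `Z₁(Lext, π) = -1/(b(Lext - b)) < 0`.
With `ϑ = 1` the only second `ℓ`-derivatives left are those of `H`, so `Z₁` is continuous at
`(Lext, π)` as soon as `F, G` are `C¹` and `H` is `C²` there; hence `Z₁ < 0` on a neighbourhood. -/

open Topology

noncomputable def productAnsatz (a b : ℝ) (F G : ℝ → ℝ) (p : ℝ × ℝ) : ℝ :=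
  F p.1 * (a + b * cos p.2) ^ 2 + G p.1

theorem Zscalar_one (b : ℝ) (H : ℝ → ℝ) (𝓕 : ℝ × ℝ → ℝ) (l β : ℝ) :
    Zscalar b H 𝓕 1 l β =
      1 / (4 * b ^ 2) * ((pdb 𝓕 l β / 𝓕 (l, β)) ^ 2 - 2 * pdbb 𝓕 l β / 𝓕 (l, β))
      + 1 / 4 * (2 * deriv (deriv H) l / H l - (deriv H l / H l) ^ 2
          + deriv H l / H l * (pdl 𝓕 l β / 𝓕 (l, β))) := by
  simp [Zscalar]

theorem exists_pos_forall_Ioo_of_eventually_nhds_prod {P : ℝ × ℝ → Prop} {x y : ℝ}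
    (h : ∀ᶠ p in 𝓝 (x, y), P p) :
    ∃ δ > 0, ∀ l β, l ∈ Ioo (x - δ) (x + δ) → β ∈ Ioo (y - δ) (y + δ) → P (l, β) := by
  obtain ⟨δ, hδ, hball⟩ := Metric.eventually_nhds_iff_ball.mp h
  refine ⟨δ, hδ, fun l β hl hβ => hball _ ?_⟩
  rw [← ball_prod_same, mem_prod, Real.ball_eq_Ioo, Real.ball_eq_Ioo]
  exact ⟨hl, hβ⟩

section ProductAnsatz

variable {a b : ℝ} {F G H : ℝ → ℝ} {l β : ℝ}

theorem hasDerivAt_productAnsatz_snd (l β : ℝ) :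
    HasDerivAt (fun y => productAnsatz a b F G (l, y))
      (-2 * b * F l * sin β * (a + b * cos β)) β :=
  (((((hasDerivAt_cos β).const_mul b).const_add a).pow 2).const_mul (F l) |>.add_const (G l))
    |>.congr_deriv (by push_cast; ring)

theorem pdb_productAnsatz (l β : ℝ) :
    pdb (productAnsatz a b F G) l β = -2 * b * F l * sin β * (a + b * cos β) :=
  (hasDerivAt_productAnsatz_snd l β).deriv

theorem pdbb_productAnsatz (l β : ℝ) :
    pdbb (productAnsatz a b F G) l β =
      2 * b * F l * (b * sin β ^ 2 - cos β * (a + b * cos β)) := by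
  have := ((hasDerivAt_sin β).const_mul (-2 * b * F l)).mul
    (((hasDerivAt_cos β).const_mul b).const_add a)
  simp only [pdbb, pdb_productAnsatz]
  exact (this.congr_deriv (by ring)).deriv

theorem productAnsatz_pi (l : ℝ) : productAnsatz a b F G (l, π) = F l * (a - b) ^ 2 + G l := by
  simp [productAnsatz, sub_eq_add_neg]

theorem pdl_productAnsatz (hF : DifferentiableAt ℝ F l) (hG : DifferentiableAt ℝ G l) (β : ℝ) :
    pdl (productAnsatz a b F G) l β = deriv F l * (a + b * cos β) ^ 2 + deriv G l :=
  ((hF.hasDerivAt.mul_const ((a + b * cos β) ^ 2)).add hG.hasDerivAt).deriv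

theorem continuousAt_productAnsatz (hF : ContinuousAt F l) (hG : ContinuousAt G l) (β : ℝ) :
    ContinuousAt (productAnsatz a b F G) (l, β) := by
  unfold productAnsatz
  fun_prop

theorem continuousAt_pdl_productAnsatz (hF : ContDiffAt ℝ 1 F l) (hG : ContDiffAt ℝ 1 G l)
    (β : ℝ) : ContinuousAt (fun p : ℝ × ℝ => pdl (productAnsatz a b F G) p.1 p.2) (l, β) := by
  have hpdl : (fun p : ℝ × ℝ => deriv F p.1 * (a + b * cos p.2) ^ 2 + deriv G p.1)
      =ᶠ[𝓝 (l, β)] fun p => pdl (productAnsatz a b F G) p.1 p.2 := by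
    filter_upwards [continuousAt_fst.eventually ((hF.eventually (by simp)).and
      (hG.eventually (by simp)))] with p ⟨hFp, hGp⟩
    rw [pdl_productAnsatz (hFp.differentiableAt one_ne_zero) (hGp.differentiableAt one_ne_zero)]
  refine ContinuousAt.congr ?_ hpdl
  have hF' : ContinuousAt (deriv F) l := (hF.derivWithin (m := 0) (by simp)).continuousAt
  have hG' : ContinuousAt (deriv G) l := (hG.derivWithin (m := 0) (by simp)).continuousAt
  fun_prop

theorem continuousAt_Zscalar_one_productAnsatz (hF : ContDiffAt ℝ 1 F l)
    (hG : ContDiffAt ℝ 1 G l) (hH : ContDiffAt ℝ 2 H l) (hHl : H l ≠ 0)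
    (h𝓕 : productAnsatz a b F G (l, β) ≠ 0) :
    ContinuousAt (fun p : ℝ × ℝ => Zscalar b H (productAnsatz a b F G) 1 p.1 p.2) (l, β) := by
  simp only [Zscalar_one, pdb_productAnsatz, pdbb_productAnsatz]
  have h𝓕c := continuousAt_productAnsatz (a := a) (b := b) hF.continuousAt hG.continuousAt β
  have hpdl := continuousAt_pdl_productAnsatz (a := a) (b := b) hF hG β
  have hH₀ : ContinuousAt H l := hH.continuousAt
  have hH' : ContDiffAt ℝ 1 (deriv H) l := hH.derivWithin (by norm_num)
  have hH₁ : ContinuousAt (deriv H) l := hH'.continuousAt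
  have hH₂ : ContinuousAt (deriv (deriv H)) l := (hH'.derivWithin (m := 0) (by simp)).continuousAt
  fun_prop (disch := assumption)

theorem Zscalar_one_productAnsatz_pi (hb : b ≠ 0) (hab : a ≠ b) (hF : F l = 1) (hG : G l = 0)
    (hH₁ : deriv H l = 0) (hH₂ : deriv (deriv H) l = 0) :
    Zscalar b H (productAnsatz a b F G) 1 l π = -1 / (b * (a - b)) := by
  have hab' : a - b ≠ 0 := sub_ne_zero.mpr hab
  simp only [Zscalar_one, pdb_productAnsatz, pdbb_productAnsatz, productAnsatz_pi, hF, hG, hH₁,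
    hH₂, sin_pi, cos_pi, mul_neg_one, ← sub_eq_add_neg]
  field_simp
  ring

end ProductAnsatz

theorem NEC_violated_near_external_boundary_product_ansatz_general
    (Lint Lext b : ℝ) (hLL : Lint < Lext) (hb : 0 < b) (hbL : b < Lext)
    (F G H : ℝ → ℝ)
    (U : Set ℝ) (hUopen : IsOpen U) (hUsub : Set.Ioc Lint Lext ⊆ U)
    (hF : ContDiffOn ℝ 2 F U) (hG : ContDiffOn ℝ 2 G U) (hH : ContDiffOn ℝ 2 H U)
    (hGext : G Lext = 0) (hFext : F Lext = 1) (hHext : H Lext = 1)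
    (hH1 : deriv H Lext = 0) (hH2 : deriv (deriv H) Lext = 0) :
    ∃ δ > 0, ∀ l β : ℝ, l ∈ Set.Ioo (Lext - δ) Lext → β ∈ Set.Ioo (Real.pi - δ) (Real.pi + δ) →
      Zscalar b H (fun p : ℝ × ℝ => F p.1 * (Lext + b * Real.cos p.2) ^ 2 + G p.1) 1 l β < 0 := by
  have hU : U ∈ 𝓝 Lext := hUopen.mem_nhds (hUsub ⟨hLL, le_rfl⟩)
  have hbL' : Lext ≠ b := hbL.ne'
  have hcont := continuousAt_Zscalar_one_productAnsatz (a := Lext) (b := b) (β := π)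
    ((hF.contDiffAt hU).of_le one_le_two) ((hG.contDiffAt hU).of_le one_le_two)
    (hH.contDiffAt hU) (hHext ▸ one_ne_zero)
    (by simpa [productAnsatz_pi, hFext, hGext] using sub_ne_zero.mpr hbL')
  have hneg : Zscalar b H (productAnsatz Lext b F G) 1 Lext π < 0 := by
    rw [Zscalar_one_productAnsatz_pi hb.ne' hbL' hFext hGext hH1 hH2]
    exact div_neg_of_neg_of_pos neg_one_lt_zero (mul_pos hb (sub_pos.mpr hbL))
  obtain ⟨δ, hδ, hbox⟩ :=
    exists_pos_forall_Ioo_of_eventually_nhds_prod (hcont.eventually (gt_mem_nhds hneg))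
  exact ⟨δ, hδ, fun l β hl hβ => hbox l β ⟨hl.1, hl.2.trans (by linarith)⟩ hβ⟩

/-- Part (ii) of the Corollary of the paper: for the product ansatz
`𝓕(ℓ,β) = F(ℓ)(Lext + b cos β)² + G(ℓ)`, if moreover `H'(Lext) = H''(Lext) = 0`, then `Z_1 < 0`
(violation of the null energy condition) in an open set close to `ℓ = Lext` and `β = π`. -/
theorem NEC_violated_near_external_boundary_product_ansatz
    (Lint Lext b : ℝ) (hLint : 0 < Lint) (hLL : Lint < Lext) (hb : 0 < b) (hbL : b < Lext)
    (F G H : ℝ → ℝ)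
    (U : Set ℝ) (hUopen : IsOpen U) (hUsub : Set.Ioc Lint Lext ⊆ U)
    (hF : ContDiffOn ℝ 2 F U) (hG : ContDiffOn ℝ 2 G U) (hH : ContDiffOn ℝ 2 H U)
    (hHpos : ∀ x ∈ U, 0 < H x)
    (hcalFpos : ∀ l ∈ Set.Ioc Lint Lext, ∀ β : ℝ,
      0 < F l * (Lext + b * Real.cos β) ^ 2 + G l)
    (hGext : G Lext = 0) (hFext : F Lext = 1) (hHext : H Lext = 1)
    (hF1 : deriv F Lext = 0) (hF2 : deriv (deriv F) Lext = 0)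
    (hG1 : deriv G Lext = 0) (hG2 : deriv (deriv G) Lext = 0)
    (hH1 : deriv H Lext = 0) (hH2 : deriv (deriv H) Lext = 0) :
    ∃ δ > 0, ∀ l β : ℝ, l ∈ Set.Ioo (Lext - δ) Lext → β ∈ Set.Ioo (Real.pi - δ) (Real.pi + δ) →
      Zscalar b H (fun p : ℝ × ℝ => F p.1 * (Lext + b * Real.cos p.2) ^ 2 + G p.1) 1 l β < 0 :=
  NEC_violated_near_external_boundary_product_ansatz_general Lint Lext b hLL hb hbL F G H U hUopen
    hUsub hF hG hH hGext hFext hHext hH1 hH2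
end
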